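/- arXiv:math/9402212 — 2 statements merged into one kernel-verified Lean document; each statement's English description precedes it below -/
import Mathlib

section
/- The Askey-Wilson operator satisfies D_q[x·Ψ_n(x)] = (q^{(1+n)/2} − q^{−(n+1)/2})/(q^{1/2} − q^{−1/2}) · 2x · Ψ_{n−1}(x) for all n ≥ 1. -/
/-!
Write `s = √q` and `S = s ^ n`. Peeling the last factor off the first q-Pochhammer symbol of
`g_n(s z)` and the first factor off the second leaves `g_{n-1}(z)` times
`i (1 - i S z) (1 - i (S z)⁻¹) = S z + (S z)⁻¹`. Since `g_n(z⁻¹) = g_n(z)`, the same identity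
at `z⁻¹` evaluates `g_n(z / s)`, and the difference of the two values of `x g_n` collapses to
`(s S - (s S)⁻¹) (z² - z⁻²) / 2 · g_{n-1}(z)`.
-/

noncomputable section

open Complex

def qPochC (a p : ℂ) (n : ℕ) : ℂ := ∏ j ∈ Finset.range n, (1 - a * p ^ j)

def gPsi (q : ℝ) (n : ℕ) (z : ℂ) : ℂ :=
  I ^ n * qPochC (I * ((Real.sqrt q : ℂ) ^ (1 - (n : ℤ))) * z) (q : ℂ) n *
    qPochC (I * ((Real.sqrt q : ℂ) ^ (1 - (n : ℤ))) * z⁻¹) (q : ℂ) n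

/-- `g` for the function `x ↦ x Ψ_n(x)`: `z ↦ ((z+z⁻¹)/2) g_n(z)`. -/
def gxPsi (q : ℝ) (n : ℕ) (z : ℂ) : ℂ := ((z + z⁻¹) / 2) * gPsi q n z

lemma qPochC_succ (a p : ℂ) (m : ℕ) :
    qPochC a p (m + 1) = qPochC a p m * (1 - a * p ^ m) :=
  Finset.prod_range_succ _ _

lemma qPochC_succ' (a p : ℂ) (m : ℕ) :
    qPochC a p (m + 1) = (1 - a) * qPochC (a * p) p m := by
  simp only [qPochC, Finset.prod_range_succ', pow_zero, mul_one, pow_succ, mul_assoc, mul_comm]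

lemma I_mul_one_sub_I_mul_one_sub_I_inv {w : ℂ} (hw : w ≠ 0) :
    I * ((1 - I * w) * (1 - I * w⁻¹)) = w + w⁻¹ := by
  linear_combination (I * w * w⁻¹ - w - w⁻¹) * I_mul_I - I * mul_inv_cancel₀ hw

lemma gPsi_inv (q : ℝ) (n : ℕ) (z : ℂ) : gPsi q n z⁻¹ = gPsi q n z := by
  rw [gPsi, gPsi, inv_inv, mul_assoc, mul_comm (qPochC _ _ _), ← mul_assoc]

lemma gxPsi_inv (q : ℝ) (n : ℕ) (z : ℂ) : gxPsi q n z⁻¹ = gxPsi q n z := by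
  rw [gxPsi, gxPsi, gPsi_inv, inv_inv, add_comm]

lemma gPsi_succ_sqrt_mul {q : ℝ} (hq : 0 < q) (m : ℕ) {z : ℂ} (hz : z ≠ 0) :
    gPsi q (m + 1) (Real.sqrt q * z) =
      ((Real.sqrt q : ℂ) ^ (m + 1) * z + ((Real.sqrt q : ℂ) ^ (m + 1) * z)⁻¹) * gPsi q m z := by
  simp only [gPsi]
  set s : ℂ := (Real.sqrt q : ℂ)
  have hs : s ≠ 0 := ofReal_ne_zero.2 (Real.sqrt_pos.2 hq).ne'
  have hq : (q : ℂ) = s ^ 2 := by simp [s, ← ofReal_pow, Real.sq_sqrt hq.le]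
  have hpow (k : ℕ) : s ^ (1 - (k : ℤ)) = s / s ^ k := by
    rw [zpow_sub₀ hs, zpow_one, zpow_natCast]
  set S := s ^ (m + 1)
  have hfirst_shift : I * (s / S) * (s * z) = I * (s / s ^ m) * z := by
    simp only [S, pow_succ]; field_simp
  have hsecond_shift : I * (s / S) * (s * z)⁻¹ * s ^ 2 = I * (s / s ^ m) * z⁻¹ := by
    simp only [S, pow_succ]; field_simp
  have hfirst_last : I * (s / s ^ m) * z * (s ^ 2) ^ m = I * (S * z) := by
    simp only [S, ← pow_mul]; field_simp; ring
  have hsecond_head : I * (s / S) * (s * z)⁻¹ = I * (S * z)⁻¹ := by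
    simp only [S, pow_succ]; field_simp
  rw [hq, hpow, hpow]
  rw [qPochC_succ, hfirst_shift, hfirst_last, qPochC_succ', hsecond_shift, hsecond_head,
    ← I_mul_one_sub_I_mul_one_sub_I_inv (mul_ne_zero (pow_ne_zero _ hs) hz), pow_succ]
  ring

lemma gxPsi_succ_sqrt_mul_sub_gxPsi_succ_sqrt_inv_mul {q : ℝ} (hq : 0 < q) (m : ℕ) {z : ℂ}
    (hz : z ≠ 0) :
    gxPsi q (m + 1) (Real.sqrt q * z) - gxPsi q (m + 1) ((Real.sqrt q : ℂ)⁻¹ * z) =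
      ((Real.sqrt q : ℂ) ^ (m + 2) - ((Real.sqrt q : ℂ) ^ (m + 2))⁻¹) *
        ((z - z⁻¹) * (z + z⁻¹) / 2) * gPsi q m z := by
  have hswap : (Real.sqrt q : ℂ)⁻¹ * z = ((Real.sqrt q : ℂ) * z⁻¹)⁻¹ := by rw [mul_inv, inv_inv]
  rw [hswap, gxPsi_inv, gxPsi, gxPsi, gPsi_succ_sqrt_mul hq m hz,
    gPsi_succ_sqrt_mul hq m (inv_ne_zero hz), gPsi_inv]
  simp only [mul_inv, inv_inv]
  ring

lemma gxPsi_askeyWilson_quotient {q : ℝ} (hq : 0 < q) (m : ℕ) {z : ℂ} (hz : z - z⁻¹ ≠ 0) :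
    (gxPsi q (m + 1) (Real.sqrt q * z) - gxPsi q (m + 1) ((Real.sqrt q : ℂ)⁻¹ * z)) /
        (((Real.sqrt q : ℂ) - (Real.sqrt q : ℂ)⁻¹) * (z - z⁻¹) / 2) =
      (((Real.sqrt q : ℂ) ^ (m + 2) - ((Real.sqrt q : ℂ) ^ (m + 2))⁻¹) /
        ((Real.sqrt q : ℂ) - (Real.sqrt q : ℂ)⁻¹)) * (z + z⁻¹) * gPsi q m z := by
  have hz0 : z ≠ 0 := by rintro rfl; simp at hz
  rw [gxPsi_succ_sqrt_mul_sub_gxPsi_succ_sqrt_inv_mul hq m hz0]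
  generalize (Real.sqrt q : ℂ) ^ (m + 2) - ((Real.sqrt q : ℂ) ^ (m + 2))⁻¹ = c
  generalize (Real.sqrt q : ℂ) - (Real.sqrt q : ℂ)⁻¹ = a
  calc c * ((z - z⁻¹) * (z + z⁻¹) / 2) * gPsi q m z / (a * (z - z⁻¹) / 2)
      = c * (z + z⁻¹) * gPsi q m z * ((z - z⁻¹) / 2) / (a * ((z - z⁻¹) / 2)) := by ring
    _ = c / a * (z + z⁻¹) * gPsi q m z := by
      rw [mul_div_mul_right _ _ (div_ne_zero hz two_ne_zero)]; ring

theorem askeyWilson_x_mul_Psi_general (q : ℝ) (hq0 : 0 < q) (n : ℕ) (hn : 1 ≤ n)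
    (θ : ℝ) (hz : Complex.exp (θ * I) - Complex.exp (-θ * I) ≠ 0) :
    (gxPsi q n ((Real.sqrt q : ℂ) * Complex.exp (θ * I)) -
        gxPsi q n (((Real.sqrt q : ℂ))⁻¹ * Complex.exp (θ * I))) /
      (((Real.sqrt q : ℂ) - ((Real.sqrt q : ℂ))⁻¹) *
        (Complex.exp (θ * I) - Complex.exp (-θ * I)) / 2) =
      (((Real.sqrt q : ℂ) ^ (1 + (n : ℤ)) - ((Real.sqrt q : ℂ)) ^ (-(1 + (n : ℤ)))) /
          ((Real.sqrt q : ℂ) - ((Real.sqrt q : ℂ))⁻¹)) *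
        (2 * (Real.cos θ : ℂ)) * gPsi q (n - 1) (Complex.exp (θ * I)) := by
  obtain ⟨m, rfl⟩ := Nat.exists_eq_add_of_le' hn
  have hexp_neg : Complex.exp (-θ * I) = (Complex.exp (θ * I))⁻¹ := by
    rw [← Complex.exp_neg, neg_mul]
  have hcos : 2 * (Real.cos θ : ℂ) = Complex.exp (θ * I) + (Complex.exp (θ * I))⁻¹ := by
    rw [ofReal_cos, two_cos, ← hexp_neg, neg_mul]
  have hexponent : 1 + ((m + 1 : ℕ) : ℤ) = ((m + 2 : ℕ) : ℤ) := by push_cast; ring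
  rw [hexp_neg] at hz ⊢
  rw [hcos, zpow_neg, hexponent, zpow_natCast, Nat.add_sub_cancel]
  exact gxPsi_askeyWilson_quotient hq0 m hz

/-- `D_q [x Ψ_n(x)] = (q^{(1+n)/2} - q^{-(n+1)/2})/(q^{1/2} - q^{-1/2}) · 2x · Ψ_{n-1}(x)`,
stated at `x = cos θ`, `z = e^{iθ}` with `e^{iθ} ≠ e^{-iθ}`. -/
theorem askeyWilson_x_mul_Psi (q : ℝ) (hq0 : 0 < q) (hq1 : q < 1) (n : ℕ) (hn : 1 ≤ n)
    (θ : ℝ) (hz : Complex.exp (θ * I) - Complex.exp (-θ * I) ≠ 0) :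
    (gxPsi q n ((Real.sqrt q : ℂ) * Complex.exp (θ * I)) -
        gxPsi q n (((Real.sqrt q : ℂ))⁻¹ * Complex.exp (θ * I))) /
      (((Real.sqrt q : ℂ) - ((Real.sqrt q : ℂ))⁻¹) *
        (Complex.exp (θ * I) - Complex.exp (-θ * I)) / 2) =
      (((Real.sqrt q : ℂ) ^ (1 + (n : ℤ)) - ((Real.sqrt q : ℂ)) ^ (-(1 + (n : ℤ)))) /
          ((Real.sqrt q : ℂ) - ((Real.sqrt q : ℂ))⁻¹)) *
        (2 * (Real.cos θ : ℂ)) * gPsi q (n - 1) (Complex.exp (θ * I)) :=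
  askeyWilson_x_mul_Psi_general q hq0 n hn θ hz
end
end

section
/- The connection formula expressing Ψ_n in terms of q-Hermite polynomials: Ψ_n(x) = Σ_{k=0}^{⌊n/2⌋} (q;q)_n · q^{k(k−n)} / [(q²;q²)_k (q;q)_{n−2k}] · H_{n−2k}(x|q) for all n ≥ 0. -/
noncomputable section

def qPoch (a p : ℝ) (n : ℕ) : ℝ := ∏ j ∈ Finset.range n, (1 - a * p ^ j)

def qHermite (q : ℝ) : ℕ → ℝ → ℝ
  | 0 => fun _ => 1
  | 1 => fun x => 2 * x
  | (n + 2) => fun x => 2 * x * qHermite q (n + 1) x - (1 - q ^ (n + 1)) * qHermite q n x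

def Psi (q : ℝ) : ℕ → ℝ → ℝ
  | 0 => fun _ => 1
  | 1 => fun x => 2 * x
  | (n + 2) => fun x =>
      4 * x ^ 2 * Psi q n x - (1 - q ^ (n + 1)) * (1 - q ^ (-(n + 1) : ℤ)) * Psi q n x

/-!
The recurrence for `Ψ` reads `Ψ_{n+2} = (4x² - λ_n) Ψ_n` with `λ_n = (1 - q^{n+1})(1 - q^{-n-1})`,
while iterating the `q`-Hermite recurrence gives
`4x² H_m = H_{m+2} + (2 - q^{m+1} - q^m) H_m + (1 - q^m)(1 - q^{m-1}) H_{m-2}`.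
So the expansion propagates from `n` to `n + 2` when the coefficients satisfy a three-term
recurrence in `k`; written through the ratio of consecutive coefficients, that recurrence is a
rational identity in `q`, `q^n` and `q^k`.
-/

open Finset

theorem qPoch_zero (a p : ℝ) : qPoch a p 0 = 1 := prod_range_zero _

theorem qPoch_succ (a p : ℝ) (n : ℕ) : qPoch a p (n + 1) = qPoch a p n * (1 - a * p ^ n) :=
  prod_range_succ _ _

theorem qPoch_pos {a p : ℝ} (ha0 : 0 ≤ a) (ha1 : a < 1) (hp0 : 0 ≤ p) (hp1 : p ≤ 1) (n : ℕ) :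
    0 < qPoch a p n :=
  prod_pos fun _ _ =>
    sub_pos.2 ((mul_le_of_le_one_right ha0 (pow_le_one₀ hp0 hp1)).trans_lt ha1)

theorem one_sub_pow_ne_zero {q : ℝ} (hq0 : 0 < q) (hq1 : q < 1) {m : ℕ} (hm : m ≠ 0) :
    1 - q ^ m ≠ 0 :=
  (sub_pos.2 (pow_lt_one₀ hq0.le hq1 hm)).ne'

theorem four_mul_sq_mul_qHermite (q x : ℝ) (m : ℕ) :
    4 * x ^ 2 * qHermite q m x =
      qHermite q (m + 2) x + ((1 - q ^ (m + 1)) + (1 - q ^ m)) * qHermite q m x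
      + (1 - q ^ m) * (1 - q ^ (m - 1 : ℤ)) * qHermite q (m - 2) x := by
  match m with
  | 0 => simp [qHermite]; ring
  | 1 => simp [qHermite]; ring
  | m + 2 =>
    have : ((m + 2 : ℕ) - 1 : ℤ) = (m + 1 : ℕ) := by push_cast; ring
    rw [this, zpow_natCast]
    simp only [qHermite, Nat.add_sub_cancel]
    ring

theorem sum_range_add_two_eq_of_three_term {M : Type*} [AddCommMonoid M] (T U V W : ℕ → M)
    (N : ℕ) (h0 : T 0 = U 0) (h1 : T 1 = U 1 + V 0)
    (h : ∀ j, T (j + 2) = U (j + 2) + V (j + 1) + W j) :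
    ∑ k ∈ range (N + 2), T k =
      ∑ k ∈ range N, (U k + V k + W k) + (U N + U (N + 1) + V N) := by
  have hU : ∑ k ∈ range (N + 2), U k = ∑ k ∈ range N, U (k + 2) + U 1 + U 0 := by
    rw [sum_range_succ', sum_range_succ']
  have hV : ∑ k ∈ range (N + 1), V k = ∑ k ∈ range N, V (k + 1) + V 0 := sum_range_succ' _ _
  rw [sum_range_succ', sum_range_succ', h0, h1]
  simp only [h, sum_add_distrib]
  rw [sum_range_succ, sum_range_succ] at hU
  rw [sum_range_succ] at hV
  calc _ = (∑ k ∈ range N, U (k + 2) + U 1 + U 0) + (∑ k ∈ range N, V (k + 1) + V 0)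
        + ∑ k ∈ range N, W k := by abel
    _ = _ := by rw [← hU, ← hV]; abel

/-- The coefficient `(q;q)_n q^{k(k-n)} / ((q²;q²)_k (q;q)_{n-2k})`, defined through the ratio
of consecutive terms so that it vanishes for `n < 2 * k` instead of seeing the truncated
`n - 2 * k`. -/
def psiCoeff (q : ℝ) (n : ℕ) : ℕ → ℝ
  | 0 => 1
  | k + 1 => psiCoeff q n k * (q ^ (2 * k + 1 - n : ℤ) * (1 - q ^ (n - 2 * k : ℤ)) *
      (1 - q ^ (n - 2 * k - 1 : ℤ)) / (1 - q ^ (2 * k + 2)))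

theorem psiCoeff_eq_zero {q : ℝ} {n k : ℕ} (h : n < 2 * k) : psiCoeff q n k = 0 := by
  induction k with
  | zero => omega
  | succ k ih =>
    rw [psiCoeff]
    rcases lt_or_ge n (2 * k) with h' | h'
    · rw [ih h', zero_mul]
    · obtain h'' | h'' : n = 2 * k ∨ n = 2 * k + 1 := by omega
      all_goals subst h''; push_cast; ring_nf; simp

theorem psiCoeff_eq_of_two_mul_le {q : ℝ} (hq0 : 0 < q) (hq1 : q < 1) {n k : ℕ} (h : 2 * k ≤ n) :
    psiCoeff q n k = qPoch q q n * q ^ ((k : ℤ) * (k - n)) /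
      (qPoch (q ^ 2) (q ^ 2) k * qPoch q q (n - 2 * k)) := by
  have hq2 : 0 < q ^ 2 := by positivity
  have hq2' : q ^ 2 < 1 := pow_lt_one₀ hq0.le hq1 two_ne_zero
  induction k with
  | zero => simp [psiCoeff, qPoch_zero, (qPoch_pos hq0.le hq1 hq0.le hq1.le n).ne']
  | succ k ih =>
    obtain ⟨m, rfl⟩ : ∃ m, n = m + 2 * k + 2 := ⟨n - 2 * k - 2, by omega⟩
    have hm : qPoch q q (m + 2 * k + 2 - 2 * k) =
        qPoch q q m * (1 - q ^ (m + 1)) * (1 - q ^ (m + 2)) := by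
      rw [show m + 2 * k + 2 - 2 * k = m + 1 + 1 by omega, qPoch_succ, qPoch_succ]; ring
    have hk : qPoch (q ^ 2) (q ^ 2) (k + 1) =
        qPoch (q ^ 2) (q ^ 2) k * (1 - q ^ (2 * k + 2)) := by
      rw [qPoch_succ]; ring
    rw [psiCoeff, ih (by omega), hm, show m + 2 * k + 2 - 2 * (k + 1) = m by omega, hk]
    have e1 : ((k + 1 : ℕ) : ℤ) * ((k + 1 : ℕ) - (m + 2 * k + 2 : ℕ)) =
        (k : ℤ) * (k - (m + 2 * k + 2 : ℕ)) + -(m + 1 : ℕ) := by push_cast; ring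
    have e2 : (2 * k + 1 - (m + 2 * k + 2 : ℕ) : ℤ) = -(m + 1 : ℕ) := by push_cast; ring
    have e3 : ((m + 2 * k + 2 : ℕ) - 2 * k : ℤ) = (m + 2 : ℕ) := by push_cast; ring
    have e4 : ((m + 2 * k + 2 : ℕ) - 2 * k - 1 : ℤ) = (m + 1 : ℕ) := by push_cast; ring
    rw [e1, e2, e4, e3, zpow_add₀ hq0.ne', zpow_neg]
    simp only [zpow_natCast]
    have := (qPoch_pos hq0.le hq1 hq0.le hq1.le m).ne'
    have := (qPoch_pos hq2.le hq2' hq2.le hq2'.le k).ne'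
    have := one_sub_pow_ne_zero hq0 hq1 (m := m + 1) (by omega)
    have := one_sub_pow_ne_zero hq0 hq1 (m := m + 2) (by omega)
    have := one_sub_pow_ne_zero hq0 hq1 (m := 2 * k + 2) (by omega)
    field_simp

theorem psiCoeff_add_two_succ (q : ℝ) (n k : ℕ) :
    psiCoeff q (n + 2) (k + 1) = psiCoeff q n k *
      (q ^ (-(n + 1) : ℤ) * (1 - q ^ (n + 1)) * (1 - q ^ (n + 2)) / (1 - q ^ (2 * k + 2))) := by
  induction k with
  | zero =>
    have e1 : (2 * (0 : ℕ) + 1 - (n + 2 : ℕ) : ℤ) = -(n + 1) := by push_cast; ring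
    have e2 : ((n + 2 : ℕ) - 2 * (0 : ℕ) : ℤ) = (n + 2 : ℕ) := by push_cast; ring
    have e3 : ((n + 2 : ℕ) - 2 * (0 : ℕ) - 1 : ℤ) = (n + 1 : ℕ) := by push_cast; ring
    rw [psiCoeff, psiCoeff, psiCoeff, e1, e3, e2, zpow_natCast, zpow_natCast]
    ring
  | succ k ih =>
    have e1 : (2 * (k + 1 : ℕ) + 1 - (n + 2 : ℕ) : ℤ) = 2 * k + 1 - n := by push_cast; ring
    have e2 : ((n + 2 : ℕ) - 2 * (k + 1 : ℕ) : ℤ) = n - 2 * k := by push_cast; ring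
    have e3 : ((n + 2 : ℕ) - 2 * (k + 1 : ℕ) - 1 : ℤ) = n - 2 * k - 1 := by push_cast; ring
    rw [psiCoeff, ih, psiCoeff, e1, e3, e2]
    ring

theorem psiCoeff_add_two_one {q : ℝ} (hq0 : 0 < q) (hq1 : q < 1) (n : ℕ) :
    psiCoeff q (n + 2) 1 = psiCoeff q n 1
      + ((1 - q ^ (n + 1)) + (1 - q ^ n) - (1 - q ^ (n + 1)) * (1 - q ^ (-(n + 1) : ℤ))) := by
  have hq := hq0.ne'
  have h1 := one_sub_pow_ne_zero hq0 hq1 (m := 2) (by omega)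
  rw [psiCoeff_add_two_succ, psiCoeff.eq_2 q n 0, psiCoeff.eq_1]
  push_cast
  simp only [zpow_sub₀ hq, zpow_add₀ hq, zpow_neg, zpow_natCast, zpow_one, sub_zero]
  field_simp
  ring

theorem psiCoeff_add_two_add_two {q : ℝ} (hq0 : 0 < q) (hq1 : q < 1) (n k : ℕ) :
    psiCoeff q (n + 2) (k + 2) = psiCoeff q n (k + 2)
      + psiCoeff q n (k + 1) * ((1 - q ^ (n - 2 * (k + 1) + 1 : ℤ))
          + (1 - q ^ (n - 2 * (k + 1) : ℤ)) - (1 - q ^ (n + 1)) * (1 - q ^ (-(n + 1) : ℤ)))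
      + psiCoeff q n k * ((1 - q ^ (n - 2 * k : ℤ)) * (1 - q ^ (n - 2 * k - 1 : ℤ))) := by
  have hq := hq0.ne'
  have h1 := one_sub_pow_ne_zero hq0 hq1 (m := 2 * k + 2) (by omega)
  have h2 := one_sub_pow_ne_zero hq0 hq1 (m := 2 * (k + 1) + 2) (by omega)
  rw [psiCoeff_add_two_succ, psiCoeff.eq_2 q n (k + 1), psiCoeff.eq_2 q n k]
  push_cast at *
  simp only [zpow_sub₀ hq, zpow_add₀ hq, zpow_neg, zpow_natCast, two_mul, zpow_one] at *
  field_simp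
  ring

theorem mul_psiCoeff_mul_qHermite (q x c : ℝ) (n k : ℕ) :
    (4 * x ^ 2 - c) * (psiCoeff q n k * qHermite q (n - 2 * k) x) =
      psiCoeff q n k * qHermite q (n + 2 - 2 * k) x
      + psiCoeff q n k * ((1 - q ^ (n - 2 * k + 1 : ℤ)) + (1 - q ^ (n - 2 * k : ℤ)) - c)
        * qHermite q (n - 2 * k) x
      + psiCoeff q n k * ((1 - q ^ (n - 2 * k : ℤ)) * (1 - q ^ (n - 2 * k - 1 : ℤ)))
        * qHermite q (n - 2 * k - 2) x := by
  rcases le_or_gt (2 * k) n with h | h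
  · obtain ⟨m, rfl⟩ : ∃ m, n = m + 2 * k := ⟨n - 2 * k, by omega⟩
    have e1 : ((m + 2 * k : ℕ) - 2 * k + 1 : ℤ) = (m + 1 : ℕ) := by push_cast; ring
    have e2 : ((m + 2 * k : ℕ) - 2 * k : ℤ) = m := by push_cast; ring
    have e3 : ((m + 2 * k : ℕ) - 2 * k - 1 : ℤ) = m - 1 := by push_cast; ring
    rw [e1, e3, e2, zpow_natCast, zpow_natCast, show m + 2 * k + 2 - 2 * k = m + 2 by omega,
      show m + 2 * k - 2 * k - 2 = m - 2 by omega, Nat.add_sub_cancel]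
    linear_combination psiCoeff q (m + 2 * k) k * four_mul_sq_mul_qHermite q x m
  · simp [psiCoeff_eq_zero h]

theorem Psi_eq_sum_psiCoeff {q : ℝ} (hq0 : 0 < q) (hq1 : q < 1) (n : ℕ) (x : ℝ) :
    Psi q n x = ∑ k ∈ range (n + 1), psiCoeff q n k * qHermite q (n - 2 * k) x := by
  induction n using Nat.twoStepInduction with
  | zero => simp [Psi, qHermite, psiCoeff]
  | one =>
    rw [sum_range_succ, psiCoeff_eq_zero (by norm_num)]
    simp [Psi, qHermite, psiCoeff]
  | more n ih _ =>
    set c := (1 - q ^ (n + 1)) * (1 - q ^ (-(n + 1) : ℤ)) with hc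
    have hPsi : Psi q (n + 2) x = (4 * x ^ 2 - c) * Psi q n x := by rw [Psi]; ring
    rw [hPsi, ih, mul_sum, sum_range_add_two_eq_of_three_term
      (fun k => psiCoeff q (n + 2) k * qHermite q (n + 2 - 2 * k) x)
      (fun k => psiCoeff q n k * qHermite q (n + 2 - 2 * k) x)
      (fun k => psiCoeff q n k * ((1 - q ^ (n - 2 * k + 1 : ℤ)) + (1 - q ^ (n - 2 * k : ℤ)) - c)
        * qHermite q (n - 2 * k) x)
      (fun k => psiCoeff q n k * ((1 - q ^ (n - 2 * k : ℤ)) * (1 - q ^ (n - 2 * k - 1 : ℤ)))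
        * qHermite q (n - 2 * k - 2) x) (n + 1)]
    · rw [psiCoeff_eq_zero (by omega : n < 2 * (n + 1)),
        psiCoeff_eq_zero (by omega : n < 2 * (n + 1 + 1))]
      simp only [zero_mul, add_zero]
      exact sum_congr rfl fun k _ => mul_psiCoeff_mul_qHermite q x c n k
    · simp only [psiCoeff]
    · rw [psiCoeff_add_two_one hq0 hq1, ← hc, show n + 2 - 2 * 1 = n by omega]
      simp [psiCoeff, zpow_add_one₀ hq0.ne']
      ring
    · intro j
      rw [psiCoeff_add_two_add_two hq0 hq1, ← hc,
        show n + 2 - 2 * (j + 2) = n - 2 * (j + 1) by omega,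
        show n - 2 * j - 2 = n - 2 * (j + 1) by omega]
      push_cast
      ring

/-- `Ψ_n(x) = Σ_{k=0}^{⌊n/2⌋} (q;q)_n q^{k(k-n)} / ((q²;q²)_k (q;q)_{n-2k}) H_{n-2k}(x|q)`. -/
theorem Psi_in_terms_of_qHermite (q : ℝ) (hq0 : 0 < q) (hq1 : q < 1) (n : ℕ) (x : ℝ) :
    Psi q n x =
      ∑ k ∈ Finset.range (n / 2 + 1),
        qPoch q q n * q ^ ((k : ℤ) * ((k : ℤ) - n)) /
            (qPoch (q ^ 2) (q ^ 2) k * qPoch q q (n - 2 * k)) *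
          qHermite q (n - 2 * k) x := by
  calc Psi q n x = ∑ k ∈ range (n + 1), psiCoeff q n k * qHermite q (n - 2 * k) x :=
        Psi_eq_sum_psiCoeff hq0 hq1 n x
    _ = ∑ k ∈ range (n / 2 + 1), psiCoeff q n k * qHermite q (n - 2 * k) x := by
        refine (sum_subset (range_subset_range.2 (by omega)) fun k _ hk => ?_).symm
        rw [psiCoeff_eq_zero (by rw [mem_range] at hk; omega), zero_mul]
    _ = _ := sum_congr rfl fun k hk => by
        rw [psiCoeff_eq_of_two_mul_le hq0 hq1 (by rw [mem_range] at hk; omega)]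
end
end
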